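/- arXiv:0711.0446 — 7 statements merged into one kernel-verified Lean document; each statement's English description precedes it below -/
import Mathlib

section
/- Let ω : ℝ^m → (0,∞) be differentiable and for t ≥ 0 define ρ_t : ℝ^m → ℝ by ρ_t(u) = ω(−u)·ω(u)·(e^{2t} − 1)/(ω(u) + ω(−u)·e^{2t}). Then for every u ∈ ℝ^m and every direction v ∈ ℝ^m, as t → ∞: Dω(u)(v) − D_u ρ_t(u)(v) = [ Dω(u)(v)·(2·ω(u)/ω(−u) + 1) + (ω(u)/ω(−u))²·Dω(−u)(v) ]·e^{−2t} + o(e^{−2t}), where D denotes the Fréchet derivative with respect to u (for fixed t). -/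
open Real Filter Asymptotics

private lemma hilbert_aux_alg (a b A B E : ℝ) (ha : 0 < a) (hb : 0 < b) (hE : 0 < E) :
    ((A*b^2 - B*b^2 - 2*a*b*(A*(2*(b/a)+1) + (b/a)^2*B))
        + (-((A*(2*(b/a)+1) + (b/a)^2*B)*b^2)) * E⁻¹) * E⁻¹ / (b*E⁻¹ + a)^2
    = (A - (E-1)*(E*a^2*A - B*b^2)/(b+a*E)^2
        - (A*(2*(b/a)+1) + (b/a)^2*B) * E⁻¹) / E⁻¹ := by
  have hd : b + a*E ≠ 0 := by positivity
  have hd2 : b*E⁻¹ + a ≠ 0 := by positivity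
  field_simp
  ring

/-- part 2 of Lemma 1: asymptotics of the first derivative of the
radial function of the Hilbert sphere of radius `t`. -/
theorem hilbert_sphere_radial_deriv_asymptotics (m : ℕ)
    (ω : EuclideanSpace ℝ (Fin m) → ℝ) (hωpos : ∀ u, 0 < ω u)
    (hω : Differentiable ℝ ω) (u v : EuclideanSpace ℝ (Fin m)) :
    (fun t : ℝ =>
        fderiv ℝ ω u v -
          fderiv ℝ (fun x => ω (-x) * ω x * (Real.exp (2 * t) - 1) /
            (ω x + ω (-x) * Real.exp (2 * t))) u v -
          (fderiv ℝ ω u v * (2 * (ω u / ω (-u)) + 1) +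
              (ω u / ω (-u)) ^ 2 * fderiv ℝ ω (-u) v) * Real.exp (-2 * t)) =o[atTop]
      (fun t : ℝ => Real.exp (-2 * t)) := by
  set a := ω (-u) with ha'
  set b := ω u with hb'
  set A := fderiv ℝ ω u v with hA'
  set B := fderiv ℝ ω (-u) v with hB'
  have hapos : 0 < a := hωpos _
  have hbpos : 0 < b := hωpos _
  set C := A * (2 * (b / a) + 1) + (b / a) ^ 2 * B with hC'
  -- Step 1: exact formula for the Fréchet derivative
  have key : ∀ t : ℝ,
      fderiv ℝ (fun x => ω (-x) * ω x * (Real.exp (2 * t) - 1) /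
        (ω x + ω (-x) * Real.exp (2 * t))) u v =
      (Real.exp (2*t) - 1) * (Real.exp (2*t) * a^2 * A - B * b^2) /
        (b + a * Real.exp (2*t))^2 := by
    intro t
    set E := Real.exp (2*t) with hE
    have hEpos : 0 < E := Real.exp_pos _
    have hneg : HasFDerivAt (fun x : EuclideanSpace ℝ (Fin m) => -x)
        (-(ContinuousLinearMap.id ℝ _)) u := (hasFDerivAt_id u).neg
    have haF : HasFDerivAt (fun x => ω (-x))
        ((fderiv ℝ ω (-u)).comp (-(ContinuousLinearMap.id ℝ _))) u :=
      ((hω (-u)).hasFDerivAt).comp u hneg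
    have hbF : HasFDerivAt ω (fderiv ℝ ω u) u := (hω u).hasFDerivAt
    have hden : HasFDerivAt (fun x => ω x + ω (-x) * E)
        (fderiv ℝ ω u + E • ((fderiv ℝ ω (-u)).comp (-(ContinuousLinearMap.id ℝ _)))) u :=
      hbF.add (haF.mul_const E)
    have hdval : ω u + ω (-u) * E ≠ 0 :=
      (add_pos (hωpos u) (mul_pos (hωpos (-u)) hEpos)).ne'
    have hinv := (hasFDerivAt_inv hdval).comp u hden
    have hnum := (haF.mul hbF).mul_const (E - 1)
    have htot : HasFDerivAt (fun y => ω (-y) * ω y * (E - 1) * (ω y + ω (-y) * E)⁻¹)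
        ((ω (-u) * ω u * (E - 1)) •
          (ContinuousLinearMap.smulRight 1 (-((ω u + ω (-u) * E) ^ 2)⁻¹)).comp
            (fderiv ℝ ω u + E • (fderiv ℝ ω (-u)).comp
              (-ContinuousLinearMap.id ℝ (EuclideanSpace ℝ (Fin m)))) +
        (ω u + ω (-u) * E)⁻¹ •
          (E - 1) •
            (ω (-u) • fderiv ℝ ω u + ω u • (fderiv ℝ ω (-u)).comp
              (-ContinuousLinearMap.id ℝ (EuclideanSpace ℝ (Fin m))))) u := hnum.mul hinv
    have heq : (fun x => ω (-x) * ω x * (E-1) / (ω x + ω (-x) * E))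
        = fun x => (ω (-x) * ω x * (E-1)) * (ω x + ω (-x) * E)⁻¹ := by
      funext x; rw [div_eq_mul_inv]
    rw [heq, htot.fderiv]
    simp only [ContinuousLinearMap.add_apply, ContinuousLinearMap.smul_apply,
      ContinuousLinearMap.comp_apply, ContinuousLinearMap.neg_apply,
      ContinuousLinearMap.coe_id', id_eq, ContinuousLinearMap.smulRight_apply,
      ContinuousLinearMap.one_apply, smul_eq_mul, map_neg, ← ha', ← hb', ← hA', ← hB']
    field_simp
    ring
  -- Step 2: asymptotics
  have hg : ∀ x : ℝ, Real.exp (-2 * x) = 0 →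
      (A - fderiv ℝ (fun x' => ω (-x') * ω x' * (Real.exp (2 * x) - 1) /
        (ω x' + ω (-x') * Real.exp (2 * x))) u v - C * Real.exp (-2 * x)) = 0 := by
    intro x hx
    exact absurd hx (Real.exp_ne_zero _)
  rw [isLittleO_iff_tendsto hg]
  have hεlim : Tendsto (fun t : ℝ => Real.exp (-2 * t)) atTop (nhds 0) := by
    have h1 : Tendsto (fun t : ℝ => 2 * t) atTop atTop :=
      tendsto_id.const_mul_atTop two_pos
    have h2 : Tendsto (fun t : ℝ => -(2 * t)) atTop atBot :=
      tendsto_neg_atTop_atBot.comp h1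
    exact (Real.tendsto_exp_atBot.comp h2).congr fun t => by
      simp only [Function.comp_apply, neg_mul]
  set p := A * b^2 - B * b^2 - 2 * a * b * C with hp'
  set q := -(C * b^2) with hq'
  have hlim : Tendsto (fun t : ℝ =>
      (p + q * Real.exp (-2*t)) * Real.exp (-2*t) / (b * Real.exp (-2*t) + a)^2)
      atTop (nhds ((p + q * 0) * 0 / (b * 0 + a)^2)) := by
    apply Tendsto.div
    · exact (tendsto_const_nhds.add (tendsto_const_nhds.mul hεlim)).mul hεlim
    · exact ((tendsto_const_nhds.mul hεlim).add tendsto_const_nhds).pow 2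
    · positivity
  have hlim0 : Tendsto (fun t : ℝ =>
      (p + q * Real.exp (-2*t)) * Real.exp (-2*t) / (b * Real.exp (-2*t) + a)^2)
      atTop (nhds 0) := by
    convert hlim using 2
    simp
  apply hlim0.congr
  intro t
  rw [key t]
  have hEpos : 0 < Real.exp (2*t) := Real.exp_pos _
  have hεE : Real.exp (-2 * t) = (Real.exp (2*t))⁻¹ := by
    rw [← Real.exp_neg]; ring_nf
  rw [hεE]
  simp only [hp', hq', hC']
  exact hilbert_aux_alg a b A B (Real.exp (2*t)) hapos hbpos hEpos
end

section
/- Let U ⊂ ℝ^{n+1} be a bounded open convex domain with 0 ∈ U and closedBall(0, ω₀) ⊆ U for some ω₀ > 0. Let R > 0 and suppose that every boundary point has an enclosing tangent ball of radius R, i.e. for each m ∈ ∂U there is a unit vector N_m with U ⊆ {x : ⟨x − m, N_m⟩ < 0} and closure U ⊆ closedBall(m − R·N_m, R). Then for every m ∈ ∂U, the cosine of the angle between the radius vector m and the outer normal N_m satisfies ⟨m, N_m⟩/‖m‖ ≥ ω₀/R. -/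
open Set Metric RealInnerProductSpace

/-- Lemma 2: the cosine of the angle between the radius vector of a
boundary point and the outer normal is at least `ω₀ / R`. -/
theorem angle_radial_normal (n : ℕ) (U : Set (EuclideanSpace ℝ (Fin (n + 1))))
    (hUopen : IsOpen U) (hUconv : Convex ℝ U) (hUbdd : Bornology.IsBounded U)
    (h0U : (0 : EuclideanSpace ℝ (Fin (n + 1))) ∈ U)
    (ω₀ : ℝ) (hω₀ : 0 < ω₀) (hball : Metric.closedBall 0 ω₀ ⊆ U)
    (R : ℝ) (hR : 0 < R)
    (htang : ∀ m ∈ frontier U, ∃ N : EuclideanSpace ℝ (Fin (n + 1)), ‖N‖ = 1 ∧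
      U ⊆ {x | ⟪x - m, N⟫ < 0} ∧ closure U ⊆ Metric.closedBall (m - R • N) R) :
    ∀ m ∈ frontier U, ∀ N : EuclideanSpace ℝ (Fin (n + 1)), ‖N‖ = 1 →
      U ⊆ {x | ⟪x - m, N⟫ < 0} → closure U ⊆ Metric.closedBall (m - R • N) R →
      ⟪m, N⟫ / ‖m‖ ≥ ω₀ / R := by
  intro m hm N hN hhalf hclose
  set c : EuclideanSpace ℝ (Fin (n + 1)) := m - R • N with hc
  have hsub : Metric.closedBall (0 : EuclideanSpace ℝ (Fin (n + 1))) ω₀ ⊆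
      Metric.closedBall c R := fun x hx => hclose (subset_closure (hball hx))
  -- ‖c‖ + ω₀ ≤ R
  have hdist : ‖c‖ + ω₀ ≤ R := by
    by_cases hc0 : c = 0
    · have hx : (ω₀ • N) ∈ Metric.closedBall (0 : EuclideanSpace ℝ (Fin (n + 1))) ω₀ := by
        simp [mem_closedBall, dist_eq_norm, norm_smul, hN, abs_of_pos hω₀]
      have := hsub hx
      rw [mem_closedBall, dist_eq_norm, hc0, sub_zero, norm_smul, hN] at this
      simp only [mul_one] at this
      rw [hc0, norm_zero]
      calc (0 : ℝ) + ω₀ = ω₀ := by ring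
        _ = |ω₀| := (abs_of_pos hω₀).symm
        _ ≤ R := this
    · have hcn : 0 < ‖c‖ := norm_pos_iff.mpr hc0
      have hq : 0 < ω₀ / ‖c‖ := div_pos hω₀ hcn
      have hxmem : ((-(ω₀ / ‖c‖)) • c) ∈
          Metric.closedBall (0 : EuclideanSpace ℝ (Fin (n + 1))) ω₀ := by
        rw [mem_closedBall, dist_zero_right, norm_smul, Real.norm_eq_abs, abs_neg,
          abs_of_pos hq, div_mul_cancel₀ _ (ne_of_gt hcn)]
      have hxc := hsub hxmem
      rw [mem_closedBall, dist_eq_norm] at hxc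
      have heq : (-(ω₀ / ‖c‖)) • c - c = (-(ω₀ / ‖c‖) - 1) • c := by
        rw [sub_smul, one_smul]
      rw [heq, norm_smul, Real.norm_eq_abs,
        abs_of_neg (by linarith : -(ω₀ / ‖c‖) - 1 < 0)] at hxc
      have hmul : (-(-(ω₀ / ‖c‖) - 1)) * ‖c‖ = ω₀ + ‖c‖ := by
        field_simp
        ring
      linarith
  -- expand the norm
  have hRn : ‖c‖ ≤ R - ω₀ := by linarith
  have hsq : ‖c‖ ^ 2 ≤ (R - ω₀) ^ 2 := by
    have h1 : (0:ℝ) ≤ ‖c‖ := norm_nonneg _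
    nlinarith
  have hexp : ‖c‖ ^ 2 = ‖m‖ ^ 2 - 2 * (R * ⟪m, N⟫) + R ^ 2 := by
    rw [hc, @norm_sub_sq_real, real_inner_smul_right, norm_smul, hN]
    rw [Real.norm_eq_abs, abs_of_pos hR]
    ring
  -- ω₀ ≤ ‖m‖
  have hmU : m ∉ U := by
    have := hUopen.frontier_eq ▸ hm
    rw [Set.mem_diff] at this
    exact this.2
  have hmω : ω₀ ≤ ‖m‖ := by
    by_contra h
    push_neg at h
    exact hmU (hball (by simp [mem_closedBall, dist_zero_right, h.le]))
  have hmpos : (0:ℝ) < ‖m‖ := lt_of_lt_of_le hω₀ hmω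
  have hRω : ω₀ ≤ R := by linarith [norm_nonneg c]
  rw [ge_iff_le, div_le_div_iff₀ hR hmpos]
  nlinarith [sq_nonneg (‖m‖ - ω₀), mul_nonneg hω₀.le (sub_nonneg.mpr hRω), hsq, hexp]
end

section
/- Let U ⊂ ℝ^{n+1} be a bounded open convex domain and suppose there is r > 0 such that every boundary point admits an interior tangent ball of radius r, i.e. for each m ∈ ∂U there is c ∈ ℝ^{n+1} with ‖m − c‖ = r and closedBall(c, r) ⊆ closure U. Then there exists ρ₀ > 0 such that every point p ∈ U with Euclidean distance from p to ∂U at most ρ₀ has a unique nearest point π(p) ∈ ∂U, i.e. there is exactly one m ∈ ∂U with ‖p − m‖ = infDist(p, ∂U). -/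
open Set Metric
open scoped RealInnerProductSpace

/-- If `v` is a supporting direction at `m` for `closure U` (i.e. `⟪v,·⟫ ≤ ⟪v,m⟫` on
`closure U`) and a closed ball of radius `s` inside `closure U` touches `m`, then
`m - c` points along `v`. -/
lemma touching_ball_dir {E : Type*} [NormedAddCommGroup E] [InnerProductSpace ℝ E]
    {U : Set E} {v m c : E} {s : ℝ} (hs : 0 < s) (hv : v ≠ 0)
    (hsup : ∀ x ∈ closure U, ⟪v, x⟫ ≤ ⟪v, m⟫)
    (hball : Metric.closedBall c s ⊆ closure U) (hmc : ‖m - c‖ = s) :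
    s • v = ‖v‖ • (m - c) := by
  have hvn : (0:ℝ) < ‖v‖ := norm_pos_iff.mpr hv
  have hx : c + (s / ‖v‖) • v ∈ Metric.closedBall c s := by
    have : ‖(s / ‖v‖) • v‖ = s := by
      rw [norm_smul, Real.norm_eq_abs, abs_of_pos (div_pos hs hvn),
        div_mul_cancel₀ _ hvn.ne']
    simp [mem_closedBall, dist_eq_norm, this]
  have h1 := hsup _ (hball hx)
  rw [inner_add_right, real_inner_smul_right, real_inner_self_eq_norm_sq] at h1
  have hdm : s / ‖v‖ * ‖v‖ ^ 2 = s * ‖v‖ := by field_simp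
  have h2 : ‖v‖ * ‖m - c‖ ≤ ⟪v, m - c⟫ := by
    rw [inner_sub_right, hmc]
    nlinarith
  have h3 : ⟪v, m - c⟫ = ‖v‖ * ‖m - c‖ :=
    le_antisymm (real_inner_le_norm v (m - c)) h2
  have h4 := inner_eq_norm_mul_iff_real.mp h3
  rwa [hmc] at h4

/-- For an open convex set, the interior of the closure is the set itself. -/
lemma interior_closure_subset_self {E : Type*} [NormedAddCommGroup E] [NormedSpace ℝ E]
    {U : Set E} (hUopen : IsOpen U) (hUconv : Convex ℝ U) {p : E} (hp : p ∈ U) :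
    interior (closure U) ⊆ U := by
  intro z hz
  rcases eq_or_ne z p with h | h
  · rwa [h]
  obtain ⟨δ, hδ, hδsub⟩ := Metric.isOpen_iff.mp isOpen_interior z hz
  have hzp : (0:ℝ) < ‖z - p‖ := by
    rw [norm_pos_iff, sub_ne_zero]; exact h
  set ε : ℝ := δ / (2 * ‖z - p‖) with hε
  have hεpos : 0 < ε := by positivity
  set y : E := z + ε • (z - p) with hy
  have hyc : y ∈ closure U := by
    refine interior_subset (hδsub ?_)
    rw [mem_ball, dist_eq_norm]
    have h1 : ‖y - z‖ = ε * ‖z - p‖ := by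
      rw [hy]; simp [norm_smul, abs_of_pos hεpos]
    have h2 : ε * ‖z - p‖ = δ / 2 := by rw [hε]; field_simp
    rw [h1, h2]; linarith
  set a : ℝ := ε / (1 + ε) with ha
  set b : ℝ := 1 / (1 + ε) with hb
  have h1ε : (0:ℝ) < 1 + ε := by linarith
  have hab : a + b = 1 := by rw [ha, hb, ← add_div, add_comm, div_self h1ε.ne']
  have hapos : 0 < a := by rw [ha]; positivity
  have hbpos : 0 < b := by rw [hb]; positivity
  have hz_eq : z = a • p + b • y := by
    rw [hy, ha, hb]
    match_scalars <;> field_simp <;> ring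
  have := hUconv.combo_interior_closure_mem_interior
    (by rwa [hUopen.interior_eq]) hyc hapos hbpos.le hab
  rw [← hz_eq, hUopen.interior_eq] at this
  exact this

/-- Inside an open set, the ball of radius `infDist` to the frontier stays in the set. -/
lemma ball_infDist_frontier_subset {E : Type*} [NormedAddCommGroup E] [NormedSpace ℝ E]
    [ProperSpace E] {U : Set E} (hUopen : IsOpen U) (hUnuniv : U ≠ univ) {p : E} (hp : p ∈ U) :
    Metric.ball p (Metric.infDist p (frontier U)) ⊆ U := by
  have hcne : Uᶜ.Nonempty := nonempty_compl.mpr hUnuniv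
  obtain ⟨z, hz, hzd⟩ := hUopen.isClosed_compl.exists_infDist_eq_dist hcne p
  have hbc : Metric.ball p (Metric.infDist p Uᶜ) ⊆ U := by
    intro y hy
    by_contra hyU
    have h1 : Metric.infDist p Uᶜ ≤ dist p y := Metric.infDist_le_dist_of_mem hyU
    rw [mem_ball, dist_comm] at hy
    linarith
  have hD : (0:ℝ) < dist p z := by
    rw [dist_pos]; rintro rfl; exact hz hp
  have hzcl : z ∈ closure U := by
    rw [Metric.mem_closure_iff]
    intro δ hδ
    set t : ℝ := 1 - min 1 (δ / (2 * dist p z)) with ht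
    have hmin_pos : 0 < min 1 (δ / (2 * dist p z)) := lt_min one_pos (by positivity)
    have hmin_le : min 1 (δ / (2 * dist p z)) ≤ 1 := min_le_left _ _
    have ht0 : 0 ≤ t := by rw [ht]; linarith
    have ht1 : t < 1 := by rw [ht]; linarith
    refine ⟨p + t • (z - p), hbc ?_, ?_⟩
    · rw [mem_ball, hzd, dist_eq_norm]
      have h1 : ‖p + t • (z - p) - p‖ = t * ‖z - p‖ := by
        simp [norm_smul, abs_of_nonneg ht0]
      have hnz : ‖z - p‖ = dist p z := by rw [dist_comm, dist_eq_norm]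
      rw [h1, hnz]
      nlinarith
    · rw [dist_comm, dist_eq_norm]
      have h1 : p + t • (z - p) - z = (1 - t) • (p - z) := by module
      rw [h1, norm_smul, Real.norm_eq_abs, abs_of_nonneg (by linarith),
        (dist_eq_norm p z).symm, ht]
      have h2 : min 1 (δ / (2 * dist p z)) ≤ δ / (2 * dist p z) := min_le_right _ _
      have h3 : (1 - (1 - min 1 (δ / (2 * dist p z)))) = min 1 (δ / (2 * dist p z)) := by ring
      rw [h3]
      calc min 1 (δ / (2 * dist p z)) * dist p z ≤ δ / (2 * dist p z) * dist p z :=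
            mul_le_mul_of_nonneg_right h2 hD.le
        _ = δ / 2 := by field_simp
        _ < δ := by linarith
  have hzf : z ∈ frontier U := ⟨hzcl, by simpa [hUopen.interior_eq] using hz⟩
  have hle : Metric.infDist p (frontier U) ≤ Metric.infDist p Uᶜ := by
    rw [hzd]; exact Metric.infDist_le_dist_of_mem hzf
  exact (Metric.ball_subset_ball hle).trans hbc

/-- Lemma 3: near the boundary, every point of `U` has a unique
nearest boundary point. -/
theorem unique_nearest_boundary_point (n : ℕ) (U : Set (EuclideanSpace ℝ (Fin (n + 1))))
    (hUopen : IsOpen U) (hUconv : Convex ℝ U) (hUbdd : Bornology.IsBounded U)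
    (r : ℝ) (hr : 0 < r)
    (hroll : ∀ m ∈ frontier U, ∃ c : EuclideanSpace ℝ (Fin (n + 1)),
      ‖m - c‖ = r ∧ Metric.closedBall c r ⊆ closure U) :
    ∃ ρ₀ : ℝ, 0 < ρ₀ ∧ ∀ p ∈ U, Metric.infDist p (frontier U) ≤ ρ₀ →
      ∃! m : EuclideanSpace ℝ (Fin (n + 1)),
        m ∈ frontier U ∧ ‖p - m‖ = Metric.infDist p (frontier U) := by
  refine ⟨r / 2, by positivity, ?_⟩
  intro p hp hple
  have hUne : U.Nonempty := ⟨p, hp⟩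
  have hUnuniv : U ≠ univ := by
    rintro rfl
    exact NormedSpace.unbounded_univ ℝ (EuclideanSpace ℝ (Fin (n + 1))) hUbdd
  have hfr : (frontier U).Nonempty := nonempty_frontier_iff.mpr ⟨hUne, hUnuniv⟩
  have hfr_cpt : IsCompact (frontier U) :=
    Metric.isCompact_of_isClosed_isBounded isClosed_frontier
      (hUbdd.closure.subset frontier_subset_closure)
  set d := Metric.infDist p (frontier U) with hdd
  have hpfr : p ∉ frontier U := by
    rw [hUopen.frontier_eq]; exact fun h => h.2 hp
  have hd_pos : 0 < d :=
    (IsClosed.notMem_iff_infDist_pos isClosed_frontier hfr).mp hpfr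
  have hdr : d < r := lt_of_le_of_lt hple (by linarith)
  have hball_sub : Metric.ball p d ⊆ U := ball_infDist_frontier_subset hUopen hUnuniv hp
  have hclosed_sub : Metric.closedBall p d ⊆ closure U := by
    rw [← closure_ball p hd_pos.ne']
    exact closure_mono hball_sub
  obtain ⟨m₀, hm₀, hdm₀⟩ := hfr_cpt.exists_infDist_eq_dist hfr p
  -- key uniqueness step
  have key : ∀ m m' : EuclideanSpace ℝ (Fin (n + 1)), (m ∈ frontier U ∧ ‖p - m‖ = d) →
      (m' ∈ frontier U ∧ ‖p - m'‖ = d) → m = m' := by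
    rintro m m' ⟨hm, hnm⟩ ⟨hm', hnm'⟩
    obtain ⟨c', hc'r, hc'sub⟩ := hroll m' hm'
    have hm'U : m' ∉ U := by
      rw [hUopen.frontier_eq] at hm'; exact hm'.2
    obtain ⟨f, hf⟩ := geometric_hahn_banach_open_point hUconv hUopen hm'U
    set v := (InnerProductSpace.toDual ℝ (EuclideanSpace ℝ (Fin (n + 1)))).symm f with hv
    have hvapp : ∀ x : EuclideanSpace ℝ (Fin (n + 1)), ⟪v, x⟫ = f x := fun x => InnerProductSpace.toDual_symm_apply
    have hsup : ∀ x ∈ closure U, ⟪v, x⟫ ≤ ⟪v, m'⟫ := by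
      intro x hx
      rw [hvapp, hvapp]
      have : closure U ⊆ {y : EuclideanSpace ℝ (Fin (n + 1)) | f y ≤ f m'} :=
        closure_minimal (fun a ha => (hf a ha).le) (isClosed_le f.continuous continuous_const)
      exact this hx
    have hvne : v ≠ 0 := by
      intro h0
      have h1 : ⟪v, p⟫ < ⟪v, m'⟫ := by rw [hvapp, hvapp]; exact hf p hp
      rw [h0] at h1; simp at h1
    have hvn : (0:ℝ) < ‖v‖ := norm_pos_iff.mpr hvne
    have h1 : r • v = ‖v‖ • (m' - c') := touching_ball_dir hr hvne hsup hc'sub hc'r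
    have h2 : d • v = ‖v‖ • (m' - p) :=
      touching_ball_dir hd_pos hvne hsup hclosed_sub (by rw [norm_sub_rev]; exact hnm')
    have h3 : r • (m' - p) = d • (m' - c') := by
      apply smul_right_injective (EuclideanSpace ℝ (Fin (n + 1))) hvn.ne'
      calc ‖v‖ • (r • (m' - p)) = r • (‖v‖ • (m' - p)) := smul_comm _ _ _
        _ = r • (d • v) := by rw [h2]
        _ = d • (r • v) := smul_comm _ _ _
        _ = d • (‖v‖ • (m' - c')) := by rw [h1]
        _ = ‖v‖ • (d • (m' - c')) := smul_comm _ _ _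
    -- geometry: m - c' = (m - p) + ((r - d)/d) • (m' - p)
    have h4 : d • (m - c') = d • (m - p) + (r - d) • (m' - p) := by
      have e1 : d • (m - c') = d • (m - p) + (d • (m' - c') - d • (m' - p)) := by module
      rw [e1, ← h3]; module
    have hnw : ‖m - p‖ = d := by rw [norm_sub_rev]; exact hnm
    have hnw' : ‖m' - p‖ = d := by rw [norm_sub_rev]; exact hnm'
    have hmU : m ∉ U := by rw [hUopen.frontier_eq] at hm; exact hm.2
    have hmc' : r ≤ ‖m - c'‖ := by
      by_contra hlt
      push_neg at hlt
      have : m ∈ Metric.ball c' r := by rwa [mem_ball, dist_eq_norm]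
      have hb : Metric.ball c' r ⊆ U := by
        intro x hx
        refine interior_closure_subset_self hUopen hUconv hp ?_
        have : Metric.ball c' r ⊆ interior (closure U) :=
          interior_maximal (Metric.ball_subset_closedBall.trans hc'sub) isOpen_ball
        exact this hx
      exact hmU (hb this)
    -- norms of the two summands
    have hn1 : ‖d • (m - p)‖ = d * d := by
      rw [norm_smul, Real.norm_eq_abs, abs_of_pos hd_pos, hnw]
    have hn2 : ‖(r - d) • (m' - p)‖ = (r - d) * d := by
      rw [norm_smul, Real.norm_eq_abs, abs_of_pos (by linarith), hnw']
    have hnsum : ‖d • (m - p) + (r - d) • (m' - p)‖ = ‖d • (m - p)‖ + ‖(r - d) • (m' - p)‖ := by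
      have hle1 : ‖d • (m - p) + (r - d) • (m' - p)‖ ≤ d * d + (r - d) * d := by
        calc ‖d • (m - p) + (r - d) • (m' - p)‖ ≤ ‖d • (m - p)‖ + ‖(r - d) • (m' - p)‖ :=
              norm_add_le _ _
          _ = d * d + (r - d) * d := by rw [hn1, hn2]
      have hge1 : d * d + (r - d) * d ≤ ‖d • (m - p) + (r - d) • (m' - p)‖ := by
        rw [← h4, norm_smul, Real.norm_eq_abs, abs_of_pos hd_pos]
        have := mul_le_mul_of_nonneg_left hmc' hd_pos.le
        nlinarith
      rw [hn1, hn2]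
      linarith
    have hsr : SameRay ℝ (d • (m - p)) ((r - d) • (m' - p)) :=
      sameRay_iff_norm_add.mpr hnsum
    have hw'ne : m' - p ≠ 0 := by
      intro h0
      rw [h0, norm_zero] at hnw'
      exact hd_pos.ne hnw'
    have hwne : m - p ≠ 0 := by
      intro h0
      rw [h0, norm_zero] at hnw
      exact hd_pos.ne hnw
    have hsr1 : SameRay ℝ (m - p) ((r - d) • (m' - p)) := by
      refine SameRay.trans ?_ hsr ?_
      · exact sameRay_smul_right_iff.mpr (Or.inl hd_pos.le)
      · intro h0
        exact absurd (smul_eq_zero.mp h0) (by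
          push_neg
          exact ⟨hd_pos.ne', hwne⟩)
    have hsr2 : SameRay ℝ (m - p) (m' - p) := by
      refine SameRay.trans hsr1 ?_ ?_
      · exact sameRay_smul_left_iff.mpr (Or.inl (by linarith))
      · intro h0
        exact absurd (smul_eq_zero.mp h0) (by
          push_neg
          refine ⟨by linarith, hw'ne⟩)
    have := hsr2.eq_of_norm_eq (by rw [hnw, hnw'])
    exact sub_left_inj.mp this
  refine ⟨m₀, ⟨hm₀, by rw [hdd, hdm₀, dist_eq_norm]⟩, ?_⟩
  intro y hy
  exact key y m₀ hy ⟨hm₀, by rw [hdd, hdm₀, dist_eq_norm]⟩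
end

section
/- Let r > 0, let p ∈ ℝ^{n+1} with ‖p‖ < r, and let v ∈ ℝ^{n+1}, v ≠ 0. Let t₊ > 0 and t₋ < 0 be the two real numbers with ‖p + t₊·v‖ = r and ‖p + t₋·v‖ = r. Then the Hilbert–Finsler norm of v at p for the ball of radius r, namely (1/2)·‖v‖·(1/‖p − (p + t₋·v)‖ + 1/‖p − (p + t₊·v)‖) = (1/2)·(1/|t₋| + 1/t₊), equals √( ‖v‖²/(r² − ‖p‖²) + ⟨v, p⟩²/(r² − ‖p‖²)² ). -/
open Real RealInnerProductSpace

/-- the explicit formula for the Hilbert--Finsler metric of the Klein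
model (the ball of radius `r`). -/
theorem klein_finsler_metric_formula (n : ℕ) (r : ℝ) (hr : 0 < r)
    (p v : EuclideanSpace ℝ (Fin (n + 1))) (hp : ‖p‖ < r) (hv : v ≠ 0)
    (tp tm : ℝ) (htp : 0 < tp) (htm : tm < 0)
    (hbp : ‖p + tp • v‖ = r) (hbm : ‖p + tm • v‖ = r) :
    (1 / 2) * ‖v‖ * (1 / ‖p - (p + tm • v)‖ + 1 / ‖p - (p + tp • v)‖) =
      (1 / 2) * (1 / |tm| + 1 / tp) ∧
    (1 / 2) * (1 / |tm| + 1 / tp) =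
      Real.sqrt (‖v‖ ^ 2 / (r ^ 2 - ‖p‖ ^ 2) + ⟪v, p⟫ ^ 2 / (r ^ 2 - ‖p‖ ^ 2) ^ 2) := by
  have hvn : (0:ℝ) < ‖v‖ := norm_pos_iff.mpr hv
  have hnorm : ∀ t : ℝ, ‖p - (p + t • v)‖ = |t| * ‖v‖ := by
    intro t
    have : p - (p + t • v) = -(t • v) := by abel
    rw [this, norm_neg, norm_smul, Real.norm_eq_abs]
  constructor
  · rw [hnorm, hnorm, abs_of_pos htp]
    have h1 : |tm| ≠ 0 := abs_ne_zero.mpr htm.ne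
    field_simp
  · set a : ℝ := ⟪v, p⟫ with ha
    set D : ℝ := r ^ 2 - ‖p‖ ^ 2 with hD
    have hDpos : 0 < D := by
      have : ‖p‖ ^ 2 < r ^ 2 := by
        apply pow_lt_pow_left₀ hp (norm_nonneg p)
        norm_num
      simpa [hD] using sub_pos.mpr this
    have key : ∀ t : ℝ, ‖p + t • v‖ = r → ‖v‖ ^ 2 * t ^ 2 + 2 * a * t = D := by
      intro t ht
      have h1 : ‖p + t • v‖ ^ 2 = r ^ 2 := by rw [ht]
      rw [@norm_add_sq_real] at h1
      rw [real_inner_smul_right, norm_smul, Real.norm_eq_abs, mul_pow, sq_abs,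
        real_inner_comm] at h1
      rw [← ha] at h1
      nlinarith [h1]
    have hep := key tp hbp
    have hem := key tm hbm
    -- sum and product of roots
    have hne : tp ≠ tm := by linarith
    have hsum : ‖v‖ ^ 2 * (tp + tm) = -2 * a := by
      have h := sub_eq_zero.mpr (hep.trans hem.symm)
      have h2 : (tp - tm) * (‖v‖ ^ 2 * (tp + tm) + 2 * a) = 0 := by linear_combination h
      rcases mul_eq_zero.mp h2 with h3 | h3
      · exact absurd (sub_eq_zero.mp h3) hne
      · linarith
    have hprod : ‖v‖ ^ 2 * (tp * tm) = -D := by linear_combination tp * hsum - hep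
    -- now pure algebra
    have habs : |tm| = -tm := abs_of_neg htm
    have hD0 : D ≠ 0 := hDpos.ne'
    have htp0 : tp ≠ 0 := htp.ne'
    have htm0 : tm ≠ 0 := htm.ne
    have hv0 : ‖v‖ ≠ 0 := hvn.ne'
    have hL : (1 / 2) * (1 / |tm| + 1 / tp) = (tp - tm) / (-2 * (tp * tm)) := by
      have h2 : (-2 : ℝ) * (tp * tm) ≠ 0 := by
        intro h
        rcases mul_eq_zero.mp h with h | h
        · norm_num at h
        · exact absurd (mul_eq_zero.mp h) (by push_neg; exact ⟨htp0, htm0⟩)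
      rw [habs, one_div_neg_eq_neg_one_div, eq_div_iff h2]
      field_simp
      ring
    have hDval : D = -(‖v‖ ^ 2 * (tp * tm)) := by linarith
    have haval : a = -(‖v‖ ^ 2 * (tp + tm)) / 2 := by linarith
    have hX : ‖v‖ ^ 2 / D + a ^ 2 / D ^ 2 = ((tp - tm) / (-2 * (tp * tm))) ^ 2 := by
      rw [hDval, haval]
      field_simp
      ring
    have hLnn : 0 ≤ (tp - tm) / (-2 * (tp * tm)) := by
      apply div_nonneg
      · linarith
      · nlinarith
    rw [hL, hX, Real.sqrt_sq hLnn]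
end

section
/- Let ω₊, ω₋ > 0, let d ∈ ℝ, and for t ≥ 0 set ρ_t = ω₋·ω₊·(e^{2t} − 1)/(ω₊ + ω₋·e^{2t}). Then ρ_t − ω₊·tanh(t + d) = ω₊·( 2/(e^{2(t+d)} + 1) − (ω₊ + ω₋)/(e^{2t}·ω₋ + ω₊) ) exactly, and as t → ∞, ρ_t − ω₊·tanh(t + d) = ω₊·(2e^{−2d} − 1 − ω₊/ω₋)·e^{−2t} + o(e^{−2t}). -/
open Real Filter Asymptotics

lemma tanh_eq_exp (x : ℝ) : Real.tanh x = (Real.exp (2 * x) - 1) / (Real.exp (2 * x) + 1) := by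
  rw [Real.tanh_eq_sinh_div_cosh, Real.sinh_eq, Real.cosh_eq, Real.exp_neg,
    show (2 : ℝ) * x = x + x by ring, Real.exp_add]
  have h : Real.exp x ≠ 0 := Real.exp_ne_zero x
  have h2 : Real.exp x * Real.exp x + 1 > 0 := by positivity
  have h3 : Real.exp x + (Real.exp x)⁻¹ > 0 := by positivity
  field_simp

/-- comparison of the radial function of the Hilbert sphere of radius
`t` with `ω₊·tanh(t + d)`. -/
theorem hilbert_sphere_tanh_comparison (ωp ωm d : ℝ) (hωp : 0 < ωp) (hωm : 0 < ωm) :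
    (∀ t : ℝ, 0 ≤ t →
      ωm * ωp * (Real.exp (2 * t) - 1) / (ωp + ωm * Real.exp (2 * t)) -
          ωp * Real.tanh (t + d) =
        ωp * (2 / (Real.exp (2 * (t + d)) + 1) -
          (ωp + ωm) / (Real.exp (2 * t) * ωm + ωp))) ∧
    (fun t : ℝ =>
        ωm * ωp * (Real.exp (2 * t) - 1) / (ωp + ωm * Real.exp (2 * t)) -
          ωp * Real.tanh (t + d) -
          ωp * (2 * Real.exp (-2 * d) - 1 - ωp / ωm) * Real.exp (-2 * t)) =o[atTop]
      (fun t : ℝ => Real.exp (-2 * t)) := by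
  set b := Real.exp (2 * d) with hbdef
  have hb : 0 < b := Real.exp_pos _
  have key : ∀ t : ℝ,
      ωm * ωp * (Real.exp (2 * t) - 1) / (ωp + ωm * Real.exp (2 * t)) -
          ωp * Real.tanh (t + d) =
        ωp * (2 / (Real.exp (2 * (t + d)) + 1) -
          (ωp + ωm) / (Real.exp (2 * t) * ωm + ωp)) := by
    intro t
    rw [tanh_eq_exp, show (2 : ℝ) * (t + d) = 2 * t + 2 * d by ring, Real.exp_add, ← hbdef]
    set a := Real.exp (2 * t) with hadef
    have ha : 0 < a := Real.exp_pos _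
    have h1 : (0:ℝ) < ωp + ωm * a := by positivity
    have h2 : (0:ℝ) < a * b + 1 := by positivity
    have h3 : (0:ℝ) < a * ωm + ωp := by positivity
    field_simp
    ring
  refine ⟨fun t _ => key t, ?_⟩
  set c := ωp * (2 * Real.exp (-2 * d) - 1 - ωp / ωm) with hcdef
  have hbc : Real.exp (-2 * d) = b⁻¹ := by
    rw [show (-2 : ℝ) * d = -(2 * d) by ring, Real.exp_neg]
  have hx : Tendsto (fun t : ℝ => Real.exp (-2 * t)) atTop (nhds 0) := by
    have := Real.tendsto_exp_neg_atTop_nhds_zero.comp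
      (tendsto_id.const_mul_atTop (show (0:ℝ) < 2 by norm_num))
    refine this.congr fun t => ?_
    simp [Function.comp]

  have hG : Tendsto (fun t : ℝ =>
      ωp * (2 / (b + Real.exp (-2 * t)) - (ωp + ωm) / (ωm + ωp * Real.exp (-2 * t))) - c)
      atTop (nhds 0) := by
    have h1 : Tendsto (fun t : ℝ => 2 / (b + Real.exp (-2 * t))) atTop (nhds (2 / (b + 0))) :=
      tendsto_const_nhds.div (tendsto_const_nhds.add hx) (by positivity)
    have h2 : Tendsto (fun t : ℝ => (ωp + ωm) / (ωm + ωp * Real.exp (-2 * t))) atTop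
        (nhds ((ωp + ωm) / (ωm + ωp * 0))) :=
      tendsto_const_nhds.div (tendsto_const_nhds.add (tendsto_const_nhds.mul hx))
        (by positivity)
    have := (((h1.sub h2).const_mul ωp).sub (tendsto_const_nhds (x := c)))
    convert this using 2
    rw [hcdef, hbc]
    field_simp
    ring
  rw [isLittleO_iff_tendsto (fun t h => absurd h (Real.exp_ne_zero _))]
  refine hG.congr fun t => ?_
  rw [key t]
  have hea : Real.exp (-2 * t) = (Real.exp (2 * t))⁻¹ := by
    rw [show (-2 : ℝ) * t = -(2 * t) by ring, Real.exp_neg]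
  rw [show (2 : ℝ) * (t + d) = 2 * t + 2 * d by ring, Real.exp_add, ← hbdef, hea]
  set a := Real.exp (2 * t) with hadef
  have ha : 0 < a := Real.exp_pos _
  have h2 : (0:ℝ) < a * b + 1 := by positivity
  have h3 : (0:ℝ) < a * ωm + ωp := by positivity
  have h4 : (0:ℝ) < b + a⁻¹ := by positivity
  have h5 : (0:ℝ) < ωm + ωp * a⁻¹ := by positivity
  field_simp
end

section
/- Let n ≥ 1 be an integer, C > 0, and r₀ > 0 with C·e^{−2r₀} < 2. Then lim_{r→∞} e^{−nr} · ∫_{r₀}^{r} [ 4·e^{2s}·((e^{2s} − 1)/(e^{2s} + 1))^{n+1} / (e^{4s} − 1) ] · ( 1 − (1 − C·e^{−2s})² )^{−(n+2)/2} ds = 1/( n · C^{(n+2)/2} · 2^{(n−2)/2} ). -/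
open Real Filter Topology intervalIntegral

/-- Elementary exponential integral. -/
lemma exp_mul_integral (ν : ℝ) (hν : 0 < ν) (a b : ℝ) :
    ∫ s in a..b, Real.exp (ν * s) = (Real.exp (ν * b) - Real.exp (ν * a)) / ν := by
  have hderiv : ∀ s ∈ Set.uIcc a b,
      HasDerivAt (fun t => Real.exp (ν * t) / ν) (Real.exp (ν * s)) s := by
    intro s _
    have h1 : HasDerivAt (fun t : ℝ => ν * t) ν s := by
      simpa using (hasDerivAt_id s).const_mul ν
    have h2 := (Real.hasDerivAt_exp (ν * s)).comp s h1
    have h3 := h2.div_const ν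
    exact h3.congr_deriv (mul_div_cancel_right₀ _ hν.ne')
  rw [intervalIntegral.integral_eq_sub_of_hasDerivAt hderiv
    (Continuous.intervalIntegrable (by fun_prop) a b)]
  ring

/-- Key asymptotic lemma: if `g` is continuous on `[r₀, ∞)` and tends to `L` at infinity,
then `e^{-ν r} ∫_{r₀}^r g(s) e^{ν s} ds → L / ν`. -/
lemma key_tendsto (ν : ℝ) (hν : 0 < ν) (r₀ L : ℝ) (g : ℝ → ℝ)
    (hg : ContinuousOn g (Set.Ici r₀))
    (hlim : Tendsto g atTop (𝓝 L)) :
    Tendsto (fun r : ℝ => Real.exp (-ν * r) * ∫ s in r₀..r, g s * Real.exp (ν * s))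
      atTop (𝓝 (L / ν)) := by
  have hsub : ∀ a b : ℝ, r₀ ≤ a → r₀ ≤ b → Set.uIcc a b ⊆ Set.Ici r₀ := by
    intro a b ha hb x hx
    exact le_trans (le_min ha hb) hx.1
  have hint : ∀ a b : ℝ, r₀ ≤ a → r₀ ≤ b →
      IntervalIntegrable (fun s => (g s - L) * Real.exp (ν * s)) MeasureTheory.volume a b := by
    intro a b ha hb
    apply ContinuousOn.intervalIntegrable
    exact (((hg.mono (hsub a b ha hb)).sub continuousOn_const).mul
      (Continuous.continuousOn (by fun_prop)))
  have hintg : ∀ a b : ℝ, r₀ ≤ a → r₀ ≤ b →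
      IntervalIntegrable (fun s => g s * Real.exp (ν * s)) MeasureTheory.volume a b := by
    intro a b ha hb
    apply ContinuousOn.intervalIntegrable
    exact ((hg.mono (hsub a b ha hb)).mul (Continuous.continuousOn (by fun_prop)))
  rw [Metric.tendsto_nhds]
  intro ε hε
  obtain ⟨R₁, hR₁⟩ := Metric.tendsto_atTop.1 hlim (ν * ε / 4) (by positivity)
  set R : ℝ := max R₁ r₀ with hRdef
  have hRr₀ : r₀ ≤ R := le_max_right _ _
  have hgR : ∀ s, R ≤ s → |g s - L| ≤ ν * ε / 4 := by
    intro s hs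
    have := hR₁ s ((le_max_left _ _).trans hs)
    rw [Real.dist_eq] at this
    exact this.le
  set K : ℝ := |∫ s in r₀..R, (g s - L) * Real.exp (ν * s)| with hKdef
  have hK0 : 0 ≤ K := abs_nonneg _
  have hexp0 : Tendsto (fun r : ℝ => Real.exp (-ν * r)) atTop (𝓝 0) := by
    simpa using Tendsto.const_mul_atTop hν tendsto_id
  have h1 : Tendsto (fun r : ℝ => Real.exp (-ν * r) * (K + |L| * Real.exp (ν * r₀) / ν))
      atTop (𝓝 0) := by
    simpa using hexp0.mul_const (K + |L| * Real.exp (ν * r₀) / ν)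
  have h1ev := h1.eventually (eventually_lt_nhds (show (0:ℝ) < ε / 4 by positivity))
  filter_upwards [eventually_ge_atTop R, h1ev] with r hrR hsmall
  have hr₀r : r₀ ≤ r := hRr₀.trans hrR
  set e : ℝ := Real.exp (-ν * r) with hedef
  have he_pos : 0 < e := Real.exp_pos _
  have hinv : e * Real.exp (ν * r) = 1 := by
    rw [hedef, ← Real.exp_add]
    ring_nf
    exact Real.exp_zero
  set A : ℝ := ∫ s in r₀..R, (g s - L) * Real.exp (ν * s) with hAdef
  set B : ℝ := ∫ s in R..r, (g s - L) * Real.exp (ν * s) with hBdef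
  have hsplit : ∫ s in r₀..r, g s * Real.exp (ν * s)
      = A + B + L * ((Real.exp (ν * r) - Real.exp (ν * r₀)) / ν) := by
    have e1 : (fun s => g s * Real.exp (ν * s))
        = fun s => (g s - L) * Real.exp (ν * s) + L * Real.exp (ν * s) := by
      funext s; ring
    rw [e1, intervalIntegral.integral_add (hint r₀ r le_rfl hr₀r)
      ((Continuous.intervalIntegrable (by fun_prop) r₀ r)),
      intervalIntegral.integral_const_mul, exp_mul_integral ν hν,
      ← intervalIntegral.integral_add_adjacent_intervals (hint r₀ R le_rfl hRr₀)
        (hint R r hRr₀ (hRr₀.trans hrR))]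
  have hB : |B| ≤ ν * ε / 4 * ((Real.exp (ν * r) - Real.exp (ν * R)) / ν) := by
    have habs : |B| ≤ ∫ s in R..r, |(g s - L) * Real.exp (ν * s)| :=
      intervalIntegral.abs_integral_le_integral_abs hrR
    have hmono : (∫ s in R..r, |(g s - L) * Real.exp (ν * s)|)
        ≤ ∫ s in R..r, ν * ε / 4 * Real.exp (ν * s) := by
      apply intervalIntegral.integral_mono_on hrR
      · exact (hint R r hRr₀ (hRr₀.trans hrR)).abs
      · exact Continuous.intervalIntegrable (by fun_prop) R r
      · intro x hx
        rw [abs_mul, abs_of_pos (Real.exp_pos _)]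
        exact mul_le_mul_of_nonneg_right (hgR x hx.1) (Real.exp_pos _).le
    calc |B| ≤ ∫ s in R..r, |(g s - L) * Real.exp (ν * s)| := habs
      _ ≤ ∫ s in R..r, ν * ε / 4 * Real.exp (ν * s) := hmono
      _ = ν * ε / 4 * ((Real.exp (ν * r) - Real.exp (ν * R)) / ν) := by
          rw [intervalIntegral.integral_const_mul, exp_mul_integral ν hν]
  have heB : e * |B| ≤ ε / 4 := by
    have h2 : e * (ν * ε / 4 * ((Real.exp (ν * r) - Real.exp (ν * R)) / ν)) ≤ ε / 4 := by
      have hy : 0 < e * Real.exp (ν * R) := by positivity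
      have key : e * (ν * ε / 4 * ((Real.exp (ν * r) - Real.exp (ν * R)) / ν))
          = ε / 4 * (e * Real.exp (ν * r)) - ε / 4 * (e * Real.exp (ν * R)) := by
        field_simp
      rw [key, hinv]; nlinarith
    calc e * |B| ≤ e * (ν * ε / 4 * ((Real.exp (ν * r) - Real.exp (ν * R)) / ν)) :=
          mul_le_mul_of_nonneg_left hB he_pos.le
      _ ≤ ε / 4 := h2
  rw [Real.dist_eq, hsplit]
  have hc : e * (A + B + L * ((Real.exp (ν * r) - Real.exp (ν * r₀)) / ν)) - L / ν
      = e * A + e * B - (L * Real.exp (ν * r₀) / ν) * e := by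
    field_simp
    linear_combination L * hinv
  rw [hc]
  have h3 : |e * A + e * B - (L * Real.exp (ν * r₀) / ν) * e|
      ≤ e * K + e * |B| + |L| * Real.exp (ν * r₀) / ν * e := by
    have := abs_add_three (e * A) (e * B) (-(L * Real.exp (ν * r₀) / ν * e))
    have h4 : e * A + e * B - (L * Real.exp (ν * r₀) / ν) * e
        = e * A + e * B + -(L * Real.exp (ν * r₀) / ν * e) := by ring
    rw [h4]
    refine this.trans ?_
    rw [abs_neg, abs_mul, abs_mul, abs_mul, abs_div, abs_mul,
      abs_of_pos he_pos, abs_of_pos (Real.exp_pos _), abs_of_pos hν]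
  refine lt_of_le_of_lt h3 ?_
  have hsmall' : e * K + |L| * Real.exp (ν * r₀) / ν * e < ε / 4 := by nlinarith
  linarith

/-- formula (12): the asymptotic behaviour of the key volume integral. -/
theorem volume_integral_asymptotics (n : ℕ) (hn : 1 ≤ n) (C r₀ : ℝ)
    (hC : 0 < C) (hr₀ : 0 < r₀) (hCr : C * Real.exp (-2 * r₀) < 2) :
    Tendsto
      (fun r : ℝ =>
        Real.exp (-(n : ℝ) * r) *
          ∫ s in r₀..r,
            (4 * Real.exp (2 * s) *
                ((Real.exp (2 * s) - 1) / (Real.exp (2 * s) + 1)) ^ (n + 1) /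
              (Real.exp (4 * s) - 1)) *
            (1 - (1 - C * Real.exp (-2 * s)) ^ 2) ^ (-(((n : ℝ) + 2) / 2)))
      atTop
      (𝓝 (1 / ((n : ℝ) * C ^ (((n : ℝ) + 2) / 2) * 2 ^ (((n : ℝ) - 2) / 2)))) := by
  have hn' : (0:ℝ) < (n : ℝ) := by exact_mod_cast Nat.pos_of_ne_zero (by omega)
  set g : ℝ → ℝ := fun s =>
    (4 * Real.exp (2 * s) *
        ((Real.exp (2 * s) - 1) / (Real.exp (2 * s) + 1)) ^ (n + 1) /
      (Real.exp (4 * s) - 1)) *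
    (1 - (1 - C * Real.exp (-2 * s)) ^ 2) ^ (-(((n : ℝ) + 2) / 2)) *
    Real.exp (-(n : ℝ) * s) with hgdef
  have hCx : ∀ s, r₀ ≤ s → C * Real.exp (-2 * s) < 2 := by
    intro s hs
    exact lt_of_le_of_lt
      (mul_le_mul_of_nonneg_left (Real.exp_le_exp.2 (by linarith)) hC.le) hCr
  have hbase : ∀ s, r₀ ≤ s → 0 < 1 - (1 - C * Real.exp (-2 * s)) ^ 2 := by
    intro s hs
    have h1 := hCx s hs
    have h2 : 0 < C * Real.exp (-2 * s) := by positivity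
    nlinarith
  have hE4 : ∀ s, r₀ ≤ s → 0 < Real.exp (4 * s) - 1 := by
    intro s hs
    have h := Real.exp_lt_exp.2 (show (0:ℝ) < 4 * s by linarith)
    simp only [Real.exp_zero] at h
    linarith
  have hgc : ContinuousOn g (Set.Ici r₀) := by
    have c1 : Continuous (fun s : ℝ =>
        4 * Real.exp (2 * s) * ((Real.exp (2 * s) - 1) / (Real.exp (2 * s) + 1)) ^ (n + 1)) := by
      apply Continuous.mul (by fun_prop)
      apply Continuous.pow
      exact Continuous.div (by fun_prop) (by fun_prop) (fun x => by positivity)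
    apply ContinuousOn.mul
    apply ContinuousOn.mul
    · exact ContinuousOn.div c1.continuousOn (by fun_prop)
        (fun s hs => ne_of_gt (hE4 s hs))
    · exact ContinuousOn.rpow_const (by fun_prop)
        (fun s hs => Or.inl (ne_of_gt (hbase s hs)))
    · fun_prop
  set H : ℝ → ℝ := fun x =>
    4 * (1 - x ^ 2)⁻¹ * ((1 - x) / (1 + x)) ^ (n + 1) *
      (C * (2 - C * x)) ^ (-(((n : ℝ) + 2) / 2)) with hHdef
  have hH0 : H 0 = 4 * (2 * C) ^ (-(((n : ℝ) + 2) / 2)) := by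
    simp only [hHdef]
    norm_num
    rw [mul_comm C 2]
  have hHc : ContinuousAt H 0 := by
    have c1 : ContinuousAt (fun x : ℝ => 4 * (1 - x ^ 2)⁻¹) 0 :=
      ContinuousAt.mul continuousAt_const (ContinuousAt.inv₀ (by fun_prop) (by norm_num))
    have c2 : ContinuousAt (fun x : ℝ => ((1 - x) / (1 + x)) ^ (n + 1)) 0 :=
      ContinuousAt.pow (ContinuousAt.div (by fun_prop) (by fun_prop) (by norm_num)) _
    have c3 : ContinuousAt (fun x : ℝ => (C * (2 - C * x)) ^ (-(((n : ℝ) + 2) / 2))) 0 := by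
      apply ContinuousAt.rpow_const (by fun_prop)
      left
      norm_num
      positivity
    exact (c1.mul c2).mul c3
  have hx0 : Tendsto (fun s : ℝ => Real.exp (-2 * s)) atTop (𝓝 0) := by
    simpa using Tendsto.const_mul_atTop (show (0:ℝ) < 2 by norm_num) tendsto_id
  have hcomp : Tendsto (fun s : ℝ => H (Real.exp (-2 * s))) atTop (𝓝 (H 0)) :=
    (hHc.tendsto).comp hx0
  have heq : ∀ᶠ s in atTop, H (Real.exp (-2 * s)) = g s := by
    filter_upwards [eventually_ge_atTop r₀] with s hs
    have hxpos : (0:ℝ) < Real.exp (-2 * s) := Real.exp_pos _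
    have hEpos : (0:ℝ) < Real.exp (2 * s) := Real.exp_pos _
    set x : ℝ := Real.exp (-2 * s) with hxdef
    set E : ℝ := Real.exp (2 * s) with hEdef
    have hxE : E * x = 1 := by
      rw [hxdef, hEdef, ← Real.exp_add]
      ring_nf
      exact Real.exp_zero
    have hE1 : 1 < E := by
      have h := Real.exp_lt_exp.2 (show (0:ℝ) < 2 * s by nlinarith)
      simpa [hEdef] using h
    have hxe : x = E⁻¹ := by
      refine eq_inv_of_mul_eq_one_left ?_
      rw [mul_comm]; exact hxE
    have hCx2 : C * x < 2 := hCx s hs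
    have hE4s : Real.exp (4 * s) = E ^ 2 := by
      rw [hEdef, show (4:ℝ) * s = 2 * s + 2 * s by ring, Real.exp_add, sq]
    have hq : x ^ (-(((n : ℝ) + 2) / 2)) = Real.exp ((n : ℝ) * s) * E := by
      rw [hxdef, show Real.exp (-2 * s) ^ (-(((n : ℝ) + 2) / 2))
          = Real.exp ((-2 * s) * (-(((n : ℝ) + 2) / 2))) from (Real.exp_mul _ _).symm,
        show (-2 * s) * (-(((n : ℝ) + 2) / 2)) = (n : ℝ) * s + 2 * s by ring,
        Real.exp_add, hEdef]
    have hsplit : (1 - (1 - C * x) ^ 2) ^ (-(((n : ℝ) + 2) / 2))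
        = (C * (2 - C * x)) ^ (-(((n : ℝ) + 2) / 2)) * (Real.exp ((n : ℝ) * s) * E) := by
      rw [show (1 - (1 - C * x) ^ 2 : ℝ) = (C * (2 - C * x)) * x by ring,
        Real.mul_rpow (by nlinarith) hxpos.le, hq]
    have hA : (1 - x) / (1 + x) = (E - 1) / (E + 1) := by
      rw [div_eq_div_iff (by positivity) (by positivity)]
      linear_combination (-2:ℝ) * hxE
    have hneg : Real.exp (-(n : ℝ) * s) = (Real.exp ((n : ℝ) * s))⁻¹ := by
      rw [neg_mul, Real.exp_neg]
    simp only [hHdef, hgdef]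
    rw [hA, hE4s, hsplit, hneg, hxe]
    have hEN : (0:ℝ) < Real.exp ((n : ℝ) * s) := Real.exp_pos _
    have hden1 : E ^ 2 - 1 ≠ 0 := by nlinarith
    have hden2 : (1:ℝ) - (E⁻¹) ^ 2 ≠ 0 := by
      have hE0 : E ≠ 0 := by positivity
      have : (E⁻¹) ^ 2 < 1 := by
        rw [inv_pow]
        rw [inv_lt_one_iff₀]
        right; nlinarith
      linarith
    have hE0 : E ≠ 0 := by positivity
    have hEN0 : Real.exp ((n : ℝ) * s) ≠ 0 := ne_of_gt hEN
    field_simp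
    ring
  have hglim : Tendsto g atTop (𝓝 (4 * (2 * C) ^ (-(((n : ℝ) + 2) / 2)))) := by
    rw [← hH0]
    exact Filter.Tendsto.congr' heq hcomp
  have hmain := key_tendsto ((n : ℝ)) hn' r₀ _ g hgc hglim
  have hfun : (fun r : ℝ =>
      Real.exp (-(n : ℝ) * r) *
        ∫ s in r₀..r,
          (4 * Real.exp (2 * s) *
              ((Real.exp (2 * s) - 1) / (Real.exp (2 * s) + 1)) ^ (n + 1) /
            (Real.exp (4 * s) - 1)) *
          (1 - (1 - C * Real.exp (-2 * s)) ^ 2) ^ (-(((n : ℝ) + 2) / 2)))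
      = fun r : ℝ => Real.exp (-(n : ℝ) * r) * ∫ s in r₀..r, g s * Real.exp ((n : ℝ) * s) := by
    funext r
    congr 1
    apply intervalIntegral.integral_congr
    intro s _
    have h1 : Real.exp (-(n : ℝ) * s) * Real.exp ((n : ℝ) * s) = 1 := by
      rw [← Real.exp_add]
      ring_nf
      exact Real.exp_zero
    simp only [hgdef]
    conv_rhs => rw [mul_assoc, h1, mul_one]
  have hval : 4 * (2 * C) ^ (-(((n : ℝ) + 2) / 2)) / (n : ℝ)
      = 1 / ((n : ℝ) * C ^ (((n : ℝ) + 2) / 2) * 2 ^ (((n : ℝ) - 2) / 2)) := by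
    have hm : (2 * C) ^ (((n : ℝ) + 2) / 2)
        = 2 ^ (((n : ℝ) + 2) / 2) * C ^ (((n : ℝ) + 2) / 2) :=
      Real.mul_rpow (by norm_num) hC.le
    have h2 : (2:ℝ) ^ (((n : ℝ) + 2) / 2) = 4 * 2 ^ (((n : ℝ) - 2) / 2) := by
      rw [show ((n : ℝ) + 2) / 2 = 2 + ((n : ℝ) - 2) / 2 by ring,
        Real.rpow_add (by norm_num), Real.rpow_two]
      norm_num
    have hneg : (2 * C) ^ (-(((n : ℝ) + 2) / 2))
        = ((2 * C) ^ (((n : ℝ) + 2) / 2))⁻¹ := Real.rpow_neg (by positivity) _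
    rw [hneg, hm, h2]
    have hC' : 0 < C ^ (((n : ℝ) + 2) / 2) := Real.rpow_pos_of_pos hC _
    have h2' : 0 < (2:ℝ) ^ (((n : ℝ) - 2) / 2) := Real.rpow_pos_of_pos (by norm_num) _
    field_simp
  rw [hfun, ← hval]
  exact hmain
end

section
/- Let U ⊂ ℝ^{n+1} be a bounded open convex domain with closedBall(0, ω₀) ⊆ U for some ω₀ > 0. Then for every boundary point m ∈ ∂U and every s ≥ 0, the Euclidean distance from the point tanh(s)·m to ∂U satisfies 2ω₀/(1 + e^{2s}) ≤ infDist(tanh(s)·m, ∂U) ≤ 2‖m‖/(1 + e^{2s}). -/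
open Real Metric Set

/-- estimates (13) and (14): the Euclidean distance from the point
`tanh(s)·m` to the boundary `∂U`. -/
theorem dist_tanh_point_to_boundary (n : ℕ) (U : Set (EuclideanSpace ℝ (Fin (n + 1))))
    (hUopen : IsOpen U) (hUconv : Convex ℝ U) (hUbdd : Bornology.IsBounded U)
    (ω₀ : ℝ) (hω₀ : 0 < ω₀) (hball : Metric.closedBall 0 ω₀ ⊆ U) :
    ∀ m ∈ frontier U, ∀ s : ℝ, 0 ≤ s →
      2 * ω₀ / (1 + Real.exp (2 * s)) ≤ Metric.infDist (Real.tanh s • m) (frontier U) ∧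
      Metric.infDist (Real.tanh s • m) (frontier U) ≤ 2 * ‖m‖ / (1 + Real.exp (2 * s)) := by
  intro m hm s hs
  set t := Real.tanh s with ht
  have ht0 : 0 ≤ t := by
    rw [ht, Real.tanh_eq_sinh_div_cosh]
    exact div_nonneg (Real.sinh_nonneg_iff.2 hs) (Real.cosh_pos s).le
  have hexp : Real.exp (2 * s) = Real.exp s * Real.exp s := by
    rw [two_mul, Real.exp_add]
  have hpos : (0:ℝ) < 1 + Real.exp (2 * s) := by positivity
  have htanh : 1 - t = 2 / (1 + Real.exp (2 * s)) := by
    rw [ht, Real.tanh_eq_sinh_div_cosh, Real.sinh_eq, Real.cosh_eq, hexp, Real.exp_neg]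
    have h1 : Real.exp s ≠ 0 := (Real.exp_pos s).ne'
    have h2 : (0:ℝ) < (Real.exp s + (Real.exp s)⁻¹) / 2 := by positivity
    field_simp
    ring
  have ht1 : t < 1 := by
    have : (0:ℝ) < 2 / (1 + Real.exp (2 * s)) := by positivity
    linarith [htanh ▸ this]
  have hmcl : m ∈ closure U := hm.1
  have hne : (frontier U).Nonempty := ⟨m, hm⟩
  constructor
  · by_contra hcon
    push_neg at hcon
    obtain ⟨q, hq, hlt⟩ := (Metric.infDist_lt_iff hne).1 hcon
    have hlt' : dist (t • m) q < (1 - t) * ω₀ := by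
      have : 2 * ω₀ / (1 + Real.exp (2 * s)) = (1 - t) * ω₀ := by
        rw [htanh]; ring
      linarith [this ▸ hlt]
    -- set x := (1-t)⁻¹ • (q - t • m)
    have h1t : (0:ℝ) < 1 - t := by linarith
    set x : EuclideanSpace ℝ (Fin (n + 1)) := (1 - t)⁻¹ • (q - t • m) with hx
    have hxnorm : ‖x‖ < ω₀ := by
      rw [hx, norm_smul, norm_inv, Real.norm_eq_abs, abs_of_pos h1t]
      rw [inv_mul_lt_iff₀ h1t]
      have : ‖q - t • m‖ = dist (t • m) q := by rw [dist_eq_norm, norm_sub_rev]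
      rw [this]; linarith
    have hxU : x ∈ interior U := by
      rw [hUopen.interior_eq]
      exact hball (Metric.mem_closedBall.2 (by simpa using hxnorm.le))
    have hq' : q = (1 - t) • x + t • m := by
      rw [hx, smul_smul, mul_inv_cancel₀ h1t.ne', one_smul]
      abel
    have : q ∈ interior U :=
      hq' ▸ hUconv.combo_interior_closure_mem_interior hxU hmcl h1t ht0 (by ring)
    exact hq.2 this
  · have hd : dist (t • m) m = (1 - t) * ‖m‖ := by
      rw [dist_eq_norm]
      have : t • m - m = (t - 1) • m := by
        rw [sub_smul, one_smul]
      rw [this, norm_smul, Real.norm_eq_abs, abs_of_nonpos (by linarith)]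
      ring_nf
    have := Metric.infDist_le_dist_of_mem (x := t • m) hm
    rw [hd, htanh] at this
    calc Metric.infDist (t • m) (frontier U) ≤ 2 / (1 + Real.exp (2 * s)) * ‖m‖ := this
      _ = 2 * ‖m‖ / (1 + Real.exp (2 * s)) := by ring
end
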